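/- arXiv:1409.2245 — 3 statements merged into one kernel-verified Lean document; each statement's English description precedes it below -/
import Mathlib

section
/- Let d ≥ 3 and p > 0 be natural numbers, and let t be a real number with 1/(d-1)^{2p} ≤ t < 1. Let (M_n), (m_n), (r_n) be sequences of natural numbers such that for every n > 0 one has M_n = 2p·m_n + 2r_n with 0 ≤ 2r_n < 2p, and such that m_n → ∞ as n → ∞. Define the real sequence S_n := Σ_{k=0}^{⌊m_n/2⌋} a_{n,k}·t^{(m_n-2k)/2} + 1/(d(d-1)^{M_n/2 - 1}) + Σ_{j=1}^{m_n} (1/(d(d-1)^{(M_n+2pj)/2 - 1}))·t^{-j/2}, where a_{n,k} := 1/(d(d-1)^{r_n + 2pk - 1}) for all (n,k) except that, by convention, a_{n,0} := 1 whenever r_n = 0. Then S_n → 0 as n → ∞. -/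
open Filter Finset Real

/-- Key pointwise bound. -/
lemma key_bound (d' q t p' e u v : ℝ) (hd : 1 ≤ d') (hq : 1 ≤ q) (ht0 : 0 < t)
    (ht2 : t < 1) (hp : 0 < p') (hqt : q ^ (-(2 * p')) ≤ t) (he0 : 0 ≤ e)
    (he : v ≤ e / (2 * p') + u) :
    1 / (d' * q ^ (e - 1)) * t ^ u ≤ q * t ^ v := by
  have hq0 : (0:ℝ) < q := lt_of_lt_of_le one_pos hq
  have h1 : 1 / (d' * q ^ (e - 1)) ≤ q ^ (1 - e) := by
    rw [show (1:ℝ) - e = -(e-1) by ring, Real.rpow_neg hq0.le, ← one_div]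
    apply one_div_le_one_div_of_le (Real.rpow_pos_of_pos hq0 _)
    nlinarith [Real.rpow_pos_of_pos hq0 (e-1)]
  have h2 : q ^ (1 - e) = q * q ^ (-e) := by
    have h := Real.rpow_add hq0 1 (-e)
    rw [Real.rpow_one] at h
    rw [sub_eq_add_neg]; exact h
  have h3 : q ^ (-e) ≤ t ^ (e / (2 * p')) := by
    have : q ^ (-e) = (q ^ (-(2*p'))) ^ (e / (2*p')) := by
      rw [← Real.rpow_mul hq0.le]
      congr 1; field_simp
    rw [this]
    exact Real.rpow_le_rpow (Real.rpow_nonneg hq0.le _) hqt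
      (div_nonneg he0 (by linarith))
  have h4 : t ^ (e / (2 * p')) * t ^ u ≤ t ^ v := by
    rw [← Real.rpow_add ht0]
    exact Real.rpow_le_rpow_of_exponent_ge ht0 ht2.le he
  have htu : 0 ≤ t ^ u := Real.rpow_nonneg ht0.le _
  calc 1 / (d' * q ^ (e - 1)) * t ^ u ≤ q ^ (1 - e) * t ^ u :=
        mul_le_mul_of_nonneg_right h1 htu
    _ = q * (q ^ (-e) * t ^ u) := by rw [h2]; ring
    _ ≤ q * (t ^ (e / (2*p')) * t ^ u) := by
        apply mul_le_mul_of_nonneg_left (mul_le_mul_of_nonneg_right h3 htu) hq0.le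
    _ ≤ q * t ^ v := mul_le_mul_of_nonneg_left h4 hq0.le

lemma lim_bound (q t : ℝ) (ht0 : 0 < t) (ht2 : t < 1) :
    Tendsto (fun k : ℕ => (2*(k:ℝ)+2) * (q * t ^ ((k:ℝ)/2))) atTop (nhds 0) := by
  have hs0 : 0 ≤ t ^ ((1:ℝ)/2) := Real.rpow_nonneg ht0.le _
  have hs1 : t ^ ((1:ℝ)/2) < 1 := Real.rpow_lt_one ht0.le ht2 (by norm_num)
  have hrw : ∀ k : ℕ, t ^ ((k:ℝ)/2) = (t ^ ((1:ℝ)/2)) ^ k := fun k => by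
    rw [← Real.rpow_natCast (t ^ ((1:ℝ)/2)) k, ← Real.rpow_mul ht0.le]
    congr 1; ring
  have h1 := (tendsto_self_mul_const_pow_of_lt_one hs0 hs1).const_mul (2*q)
  have h2 := (tendsto_pow_atTop_nhds_zero_of_lt_one hs0 hs1).const_mul (2*q)
  have h3 := h1.add h2
  simp only [mul_zero, add_zero] at h3
  refine h3.congr fun k => ?_
  rw [hrw k]; ring


/-- Lemma 4.7 of the paper (`lem::convergence_zero`): the explicit sequence `S n`
tends to zero. Powers with real exponents are real powers (`Real.rpow`). -/
theorem stmt_0 (d p : ℕ) (hd : 3 ≤ d) (hp : 0 < p) (t : ℝ)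
    (ht1 : 1 / ((d : ℝ) - 1) ^ (2 * p) ≤ t) (ht2 : t < 1)
    (M m r : ℕ → ℕ)
    (hM : ∀ n > 0, M n = 2 * p * m n + 2 * r n)
    (hr : ∀ n > 0, 2 * r n < 2 * p)
    (hm : Tendsto m atTop atTop) :
    Tendsto (fun n =>
        (∑ k ∈ Finset.range (m n / 2 + 1),
          (if r n = 0 ∧ k = 0 then (1 : ℝ)
            else 1 / ((d : ℝ) * ((d : ℝ) - 1) ^ ((r n : ℝ) + 2 * (p : ℝ) * (k : ℝ) - 1)))
            * t ^ (((m n : ℝ) - 2 * (k : ℝ)) / 2))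
        + 1 / ((d : ℝ) * ((d : ℝ) - 1) ^ ((M n : ℝ) / 2 - 1))
        + ∑ j ∈ Finset.Icc 1 (m n),
            (1 / ((d : ℝ) * ((d : ℝ) - 1) ^ (((M n : ℝ) + 2 * (p : ℝ) * (j : ℝ)) / 2 - 1)))
              * t ^ (-(j : ℝ) / 2))
      atTop (nhds 0) := by
  have hd3 : (3:ℝ) ≤ (d:ℝ) := by exact_mod_cast hd
  set q : ℝ := (d:ℝ) - 1 with hqdef
  have hq1 : (1:ℝ) ≤ q := by simp only [hqdef]; linarith
  have hq0 : (0:ℝ) < q := by linarith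
  have hd1 : (1:ℝ) ≤ (d:ℝ) := by linarith
  have hqt : q ^ (-(2 * (p:ℝ))) ≤ t := by
    rw [Real.rpow_neg hq0.le, ← one_div]
    calc 1 / q ^ (2*(p:ℝ)) = 1 / q ^ (2*p) := by
          rw [show (2*(p:ℝ)) = ((2*p : ℕ):ℝ) by push_cast; ring, Real.rpow_natCast]
      _ ≤ t := ht1
  have ht0 : 0 < t := lt_of_lt_of_le (by positivity) ht1
  have hp' : 0 < (p:ℝ) := by exact_mod_cast hp
  have hT0 : ∀ n : ℕ, 0 ≤ q * t ^ (((m n):ℝ)/2) :=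
    fun n => mul_nonneg hq0.le (Real.rpow_nonneg ht0.le _)
  -- nonnegativity
  have hnn : ∀ n : ℕ, (0:ℝ) ≤
        (∑ k ∈ Finset.range (m n / 2 + 1),
          (if r n = 0 ∧ k = 0 then (1 : ℝ)
            else 1 / ((d : ℝ) * q ^ ((r n : ℝ) + 2 * (p : ℝ) * (k : ℝ) - 1)))
            * t ^ (((m n : ℝ) - 2 * (k : ℝ)) / 2))
        + 1 / ((d : ℝ) * q ^ ((M n : ℝ) / 2 - 1))
        + ∑ j ∈ Finset.Icc 1 (m n),
            (1 / ((d : ℝ) * q ^ (((M n : ℝ) + 2 * (p : ℝ) * (j : ℝ)) / 2 - 1)))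
              * t ^ (-(j : ℝ) / 2) := by
    intro n
    have hcoef : ∀ e : ℝ, (0:ℝ) ≤ 1 / ((d : ℝ) * q ^ e) := fun e =>
      div_nonneg zero_le_one (mul_nonneg (by positivity) (Real.rpow_nonneg hq0.le _))
    refine add_nonneg (add_nonneg ?_ (hcoef _)) ?_
    · refine Finset.sum_nonneg fun k _ => mul_nonneg ?_ (Real.rpow_nonneg ht0.le _)
      split
      · norm_num
      · exact hcoef _
    · exact Finset.sum_nonneg fun j _ =>
        mul_nonneg (hcoef _) (Real.rpow_nonneg ht0.le _)
  -- eventual bound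
  have hbnd : ∀ᶠ n in atTop,
        (∑ k ∈ Finset.range (m n / 2 + 1),
          (if r n = 0 ∧ k = 0 then (1 : ℝ)
            else 1 / ((d : ℝ) * q ^ ((r n : ℝ) + 2 * (p : ℝ) * (k : ℝ) - 1)))
            * t ^ (((m n : ℝ) - 2 * (k : ℝ)) / 2))
        + 1 / ((d : ℝ) * q ^ ((M n : ℝ) / 2 - 1))
        + ∑ j ∈ Finset.Icc 1 (m n),
            (1 / ((d : ℝ) * q ^ (((M n : ℝ) + 2 * (p : ℝ) * (j : ℝ)) / 2 - 1)))
              * t ^ (-(j : ℝ) / 2)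
      ≤ (2*((m n):ℝ)+2) * (q * t ^ (((m n):ℝ)/2)) := by
    filter_upwards [eventually_gt_atTop 0] with n hn
    have hMn : (M n : ℝ) = 2 * (p:ℝ) * (m n : ℝ) + 2 * (r n : ℝ) := by
      have := hM n hn; push_cast [this]; ring
    have hr0 : (0:ℝ) ≤ (r n : ℝ) := Nat.cast_nonneg _
    set T : ℝ := q * t ^ (((m n):ℝ)/2) with hTdef
    have hT := hT0 n
    -- first sum
    have hA : (∑ k ∈ Finset.range (m n / 2 + 1),
          (if r n = 0 ∧ k = 0 then (1 : ℝ)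
            else 1 / ((d : ℝ) * q ^ ((r n : ℝ) + 2 * (p : ℝ) * (k : ℝ) - 1)))
            * t ^ (((m n : ℝ) - 2 * (k : ℝ)) / 2)) ≤ ((m n / 2 + 1 : ℕ):ℝ) * T := by
      have := Finset.sum_le_card_nsmul (Finset.range (m n / 2 + 1))
        (fun k => (if r n = 0 ∧ k = 0 then (1 : ℝ)
            else 1 / ((d : ℝ) * q ^ ((r n : ℝ) + 2 * (p : ℝ) * (k : ℝ) - 1)))
            * t ^ (((m n : ℝ) - 2 * (k : ℝ)) / 2)) T ?_
      · simpa [Finset.card_range, nsmul_eq_mul] using this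
      · intro k _
        by_cases hc : r n = 0 ∧ k = 0
        · rw [if_pos hc, hc.2]
          simp only [Nat.cast_zero, mul_zero, sub_zero, one_mul]
          exact le_mul_of_one_le_left (Real.rpow_nonneg ht0.le _) hq1
        · rw [if_neg hc]
          refine key_bound (d:ℝ) q t (p:ℝ) ((r n : ℝ) + 2 * (p:ℝ) * (k:ℝ)) _ _
            hd1 hq1 ht0 ht2 hp' hqt (by positivity) ?_
          have h5 : (k:ℝ) ≤ ((r n : ℝ) + 2 * (p:ℝ) * (k:ℝ)) / (2 * (p:ℝ)) := by
            rw [le_div_iff₀ (by positivity)]; nlinarith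
          linarith
    -- middle term
    have hB : 1 / ((d : ℝ) * q ^ ((M n : ℝ) / 2 - 1)) ≤ T := by
      have h := key_bound (d:ℝ) q t (p:ℝ) ((M n : ℝ)/2) 0 (((m n):ℝ)/2)
        hd1 hq1 ht0 ht2 hp' hqt (by rw [hMn]; positivity) ?_
      · rwa [Real.rpow_zero, mul_one] at h
      · have h5 : ((m n):ℝ)/2 ≤ ((M n : ℝ)/2) / (2 * (p:ℝ)) := by
          rw [le_div_iff₀ (by positivity), hMn]; nlinarith
        linarith
    -- last sum
    have hC : (∑ j ∈ Finset.Icc 1 (m n),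
            (1 / ((d : ℝ) * q ^ (((M n : ℝ) + 2 * (p : ℝ) * (j : ℝ)) / 2 - 1)))
              * t ^ (-(j : ℝ) / 2)) ≤ ((m n):ℝ) * T := by
      have := Finset.sum_le_card_nsmul (Finset.Icc 1 (m n))
        (fun j => (1 / ((d : ℝ) * q ^ (((M n : ℝ) + 2 * (p : ℝ) * (j : ℝ)) / 2 - 1)))
              * t ^ (-(j : ℝ) / 2)) T ?_
      · simpa [Nat.card_Icc, nsmul_eq_mul] using this
      · intro j _
        refine key_bound (d:ℝ) q t (p:ℝ) (((M n : ℝ) + 2 * (p:ℝ) * (j:ℝ)) / 2) _ _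
          hd1 hq1 ht0 ht2 hp' hqt (by rw [hMn]; positivity) ?_
        have h5 : ((m n):ℝ)/2 + (j:ℝ)/2
            ≤ (((M n : ℝ) + 2 * (p:ℝ) * (j:ℝ)) / 2) / (2 * (p:ℝ)) := by
          rw [le_div_iff₀ (by positivity), hMn]; nlinarith
        linarith
    have hhalf : ((m n / 2 + 1 : ℕ):ℝ) ≤ ((m n):ℝ) + 1 := by
      have : m n / 2 + 1 ≤ m n + 1 := by
        omega
      exact_mod_cast this
    nlinarith [hA, hB, hC, hT]
  have hg : Tendsto (fun n => (2*((m n):ℝ)+2) * (q * t ^ (((m n):ℝ)/2)))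
      atTop (nhds 0) := (lim_bound q t ht0 ht2).comp hm
  exact squeeze_zero' (Filter.Eventually.of_forall hnn) hbnd hg
end

section
/- Let G be a locally compact Hausdorff topological group, let H be a closed subgroup of G, and let K be a compact subgroup of G such that K' := H ∩ K has infinite index in K. Let q : G → G/H be the canonical projection onto the quotient space G/H of left cosets of H, endowed with the quotient topology, and let μ be a Borel measure on G/H that is finite on compact sets, invariant under the left translation action of K on G/H, and satisfies μ(q(K)) ≠ 0. Then the index of K' in K is uncountable (the set of left cosets of K' in K is an uncountable set); in particular, the singleton {q(1)} = {eH} ⊆ G/H satisfies μ({eH}) = 0. -/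
/-!
`K` acts on `G ⧸ H` with orbit `q(K)` through `eH`, and this orbit is in bijection with
`K ⧸ K'`. By `K`-invariance all points of the orbit have the same mass `μ {eH}`. The orbit is
compact, hence of finite measure, and contains infinitely many points, so this common mass is
`0` (singletons are measurable because `H` is closed). A countable orbit would then be null,
contradicting `μ (q(K)) ≠ 0`.
-/

open MeasureTheory MulAction
open scoped ENNReal

namespace MeasureTheory

variable {Γ X : Type*} [Group Γ] [MulAction Γ X] [MeasurableSpace X] {μ : Measure X}

theorem eq_zero_of_measure_singleton_eq_on_infinite [MeasurableSingletonClass X] {s : Set X}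
    (hs : s.Infinite) (hμs : μ s ≠ ∞) {c : ℝ≥0∞} (hc : ∀ x ∈ s, μ {x} = c) : c = 0 := by
  by_contra hc0
  let f := hs.natEmbedding
  have hdisj : Pairwise (Function.onFun Disjoint fun n => ({(f n : X)} : Set X)) :=
    fun m n hmn => Set.disjoint_singleton.2 fun h => hmn (f.injective (Subtype.ext h))
  refine hμs (top_le_iff.1 ?_)
  calc ∞ = ∑' _ : ℕ, c := (ENNReal.tsum_const_eq_top_of_ne_zero hc0).symm
    _ = ∑' n, μ {(f n : X)} := by simp only [hc _ (f _).2]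
    _ ≤ μ (⋃ n, {(f n : X)}) :=
      tsum_meas_le_meas_iUnion_of_disjoint μ (fun _ => measurableSet_singleton _) hdisj
    _ ≤ μ s := measure_mono (Set.iUnion_subset fun n => Set.singleton_subset_iff.2 (f n).2)

variable [SMulInvariantMeasure Γ X μ]

theorem measure_singleton_smul (g : Γ) (x : X) : μ {g • x} = μ {x} := by
  rw [← Set.smul_set_singleton, measure_smul]

theorem measure_singleton_eq_zero_of_infinite_orbit [MeasurableSingletonClass X] {x : X}
    (hinf : (orbit Γ x).Infinite) (hfin : μ (orbit Γ x) ≠ ∞) : μ {x} = 0 :=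
  eq_zero_of_measure_singleton_eq_on_infinite hinf hfin (by
    rintro _ ⟨g, rfl⟩
    exact measure_singleton_smul g x)

theorem measure_orbit_eq_zero_of_countable {x : X} (hc : (orbit Γ x).Countable)
    (hx : μ {x} = 0) : μ (orbit Γ x) = 0 := by
  rw [← Set.biUnion_of_singleton (orbit Γ x), measure_biUnion_null_iff hc]
  rintro _ ⟨g, rfl⟩
  rw [measure_singleton_smul, hx]

end MeasureTheory

namespace QuotientGroup

variable {G : Type*} [Group G] (H K : Subgroup G)

theorem subgroup_smul_one_eq_mk (k : K) : k • ((1 : G) : G ⧸ H) = ((k : G) : G ⧸ H) := by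
  show (k : G) • ((1 : G) : G ⧸ H) = _
  rw [MulAction.Quotient.smul_mk, smul_eq_mul, mul_one]

theorem image_mk_eq_orbit : (mk '' (K : Set G) : Set (G ⧸ H)) = orbit K ((1 : G) : G ⧸ H) := by
  ext x
  simp [mem_orbit_iff, subgroup_smul_one_eq_mk, eq_comm]

theorem stabilizer_mk_one_eq_subgroupOf : stabilizer K ((1 : G) : G ⧸ H) = H.subgroupOf K := by
  ext k
  rw [mem_stabilizer_iff, subgroup_smul_one_eq_mk, eq_comm, QuotientGroup.eq, inv_one, one_mul,
    Subgroup.mem_subgroupOf]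

noncomputable def orbitMkOneEquiv : orbit K ((1 : G) : G ⧸ H) ≃ K ⧸ H.subgroupOf K :=
  (orbitEquivQuotientStabilizer K _).trans
    (Subgroup.quotientEquivOfEq (stabilizer_mk_one_eq_subgroupOf H K))

end QuotientGroup

theorem stmt_3_general {G : Type*} [Group G] [TopologicalSpace G] [IsTopologicalGroup G]
    (H : Subgroup G) (hHclosed : IsClosed (H : Set G))
    (K : Subgroup G) (hKcompact : IsCompact (K : Set G))
    (hinf : Infinite (↥K ⧸ (H ⊓ K).subgroupOf K))
    [MeasurableSpace (G ⧸ H)] [BorelSpace (G ⧸ H)]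
    (μ : Measure (G ⧸ H)) [IsFiniteMeasureOnCompacts μ]
    (hμinv : ∀ k : K, Measure.map (fun x : G ⧸ H => (k : G) • x) μ = μ)
    (hμK : μ ((QuotientGroup.mk : G → G ⧸ H) '' (K : Set G)) ≠ 0) :
    ¬ Countable (↥K ⧸ (H ⊓ K).subgroupOf K) ∧
      μ {((1 : G) : G ⧸ H)} = 0 := by
  have : T1Space (G ⧸ H) := QuotientGroup.t1Space_iff.2 hHclosed
  have : SMulInvariantMeasure K (G ⧸ H) μ := ⟨fun k s hs => by
    have h := Measure.map_apply (μ := μ) (measurable_const_smul (k : G)) hs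
    rw [hμinv k] at h
    exact h.symm⟩
  let e := QuotientGroup.orbitMkOneEquiv H K
  rw [Subgroup.inf_subgroupOf_right] at hinf ⊢
  have hfin : μ (orbit K ((1 : G) : G ⧸ H)) ≠ ∞ := by
    rw [← QuotientGroup.image_mk_eq_orbit]
    exact (hKcompact.image QuotientGroup.continuous_mk).measure_ne_top
  have hzero : μ {((1 : G) : G ⧸ H)} = 0 :=
    measure_singleton_eq_zero_of_infinite_orbit
      (Set.infinite_coe_iff.1 (e.infinite_iff.2 hinf)) hfin
  rw [QuotientGroup.image_mk_eq_orbit] at hμK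
  exact ⟨fun hc => hμK (measure_orbit_eq_zero_of_countable
    (Set.countable_coe_iff.1 (e.countable_iff.2 hc)) hzero), hzero⟩

/-- Lemma 3.5 of the paper (`lem::compact_open_quotient`): if `K' = H ∩ K` has infinite
index in the compact subgroup `K` and `μ` is a `K`-invariant Borel measure on `G/H`,
finite on compacts, with `μ(q(K)) ≠ 0`, then the index of `K'` in `K` is uncountable
and `μ({eH}) = 0`. -/
theorem stmt_3 {G : Type*} [Group G] [TopologicalSpace G] [IsTopologicalGroup G]
    [LocallyCompactSpace G] [T2Space G]
    (H : Subgroup G) (hHclosed : IsClosed (H : Set G))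
    (K : Subgroup G) (hKcompact : IsCompact (K : Set G))
    (hinf : Infinite (↥K ⧸ (H ⊓ K).subgroupOf K))
    [MeasurableSpace (G ⧸ H)] [BorelSpace (G ⧸ H)]
    (μ : Measure (G ⧸ H)) [IsFiniteMeasureOnCompacts μ]
    (hμinv : ∀ k : K, Measure.map (fun x : G ⧸ H => (k : G) • x) μ = μ)
    (hμK : μ ((QuotientGroup.mk : G → G ⧸ H) '' (K : Set G)) ≠ 0) :
    ¬ Countable (↥K ⧸ (H ⊓ K).subgroupOf K) ∧
      μ {((1 : G) : G ⧸ H)} = 0 :=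
  stmt_3_general H hHclosed K hKcompact hinf μ hμinv hμK
end

section
/- Let G be a Hausdorff topological group in which every proper open subgroup is compact. Let H be a closed subgroup of G that is neither compact nor equal to G, and let K be a compact open subgroup of G. Then H ∩ K has infinite index in K. -/
namespace Subgroup

variable {G : Type*} [Group G] [TopologicalSpace G] [IsTopologicalGroup G]

theorem isOpen_of_isClosed_of_finiteIndex_subgroupOf {H K : Subgroup G}
    (hH : IsClosed (H : Set G)) (hK : IsOpen (K : Set G)) [(H.subgroupOf K).FiniteIndex] :
    IsOpen (H : Set G) := by
  have hHK : IsOpen ((H.subgroupOf K : Subgroup K) : Set K) :=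
    isOpen_of_isClosed_of_finiteIndex _ (hH.preimage continuous_subtype_val)
  have hHinfK : IsOpen ((H ⊓ K : Subgroup G) : Set G) := by
    rw [← subgroupOf_map_subtype]
    exact hK.isOpenMap_subtype_val _ hHK
  exact isOpen_mono inf_le_left hHinfK

end Subgroup

theorem stmt_6_general {G : Type*} [Group G] [TopologicalSpace G] [IsTopologicalGroup G]
    (hopen : ∀ U : Subgroup G, IsOpen (U : Set G) → U ≠ ⊤ → IsCompact (U : Set G))
    (H : Subgroup G) (hHclosed : IsClosed (H : Set G))
    (hHnoncompact : ¬ IsCompact (H : Set G)) (hHproper : H ≠ ⊤)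
    (K : Subgroup G) (hKopen : IsOpen (K : Set G)) :
    Infinite (↥K ⧸ (H ⊓ K).subgroupOf K) := by
  rw [Subgroup.inf_subgroupOf_right, ← not_finite_iff_infinite]
  intro hfinite
  have : (H.subgroupOf K).FiniteIndex := Subgroup.finiteIndex_of_finite_quotient
  have hHopen := Subgroup.isOpen_of_isClosed_of_finiteIndex_subgroupOf hHclosed hKopen
  exact hHnoncompact (hopen H hHopen hHproper)

/-- Lemma 4.1 of the paper (`lem::infinit_index`), abstract form: in a Hausdorff
topological group in which every proper open subgroup is compact, the intersection of a
closed, non-compact, proper subgroup `H` with a compact open subgroup `K` has infinite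
index in `K`. -/
theorem stmt_6 {G : Type*} [Group G] [TopologicalSpace G] [IsTopologicalGroup G] [T2Space G]
    (hopen : ∀ U : Subgroup G, IsOpen (U : Set G) → U ≠ ⊤ → IsCompact (U : Set G))
    (H : Subgroup G) (hHclosed : IsClosed (H : Set G))
    (hHnoncompact : ¬ IsCompact (H : Set G)) (hHproper : H ≠ ⊤)
    (K : Subgroup G) (hKcompact : IsCompact (K : Set G)) (hKopen : IsOpen (K : Set G)) :
    Infinite (↥K ⧸ (H ⊓ K).subgroupOf K) :=
  stmt_6_general hopen H hHclosed hHnoncompact hHproper K hKopen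
end
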